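/- Let p be a prime, L a finitely generated free abelian group, and Q ⊆ L a fine, saturated, sharp submonoid (saturated inside its group completion Q^gp ⊆ L). Define Q[1/p] = ⋃_{k ≥ 0} {x ∈ Q^gp ⊗ ℤ[1/p] : p^k·x ∈ Q}. Then Q[1/p] is an integral, saturated, sharp, uniquely p-divisible monoid, multiplication by every positive integer on Q[1/p] is injective, and there is a surjective monoid homomorphism ℕ[1/p]^m → Q[1/p], where m is the cardinality of a finite generating set of Q. In particular, Q[1/p] is p-finitely generated. -/

import Mathlib

/-- The additive submonoid `ℕ[1/p] = {a / p^k : a ∈ ℕ, k ≥ 0}` of `ℚ`. -/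
def nLoc (p : ℕ) : AddSubmonoid ℚ where
  carrier := {q : ℚ | ∃ (a : ℕ) (k : ℕ), q * (p : ℚ) ^ k = (a : ℚ)}
  zero_mem' := ⟨0, 0, by norm_num⟩
  add_mem' := by
    rintro x y ⟨a, k, ha⟩ ⟨b, l, hb⟩
    refine ⟨a * p ^ l + b * p ^ k, k + l, ?_⟩
    push_cast
    rw [pow_add]
    calc (x + y) * ((p : ℚ) ^ k * (p : ℚ) ^ l)
        = x * (p : ℚ) ^ k * (p : ℚ) ^ l + y * (p : ℚ) ^ l * (p : ℚ) ^ k := by ring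
      _ = (a : ℚ) * (p : ℚ) ^ l + (b : ℚ) * (p : ℚ) ^ k := by rw [ha, hb]

/-- The coordinatewise inclusion `ℤ^n →+ ℚ^n`. -/
def ratify {n : ℕ} : (Fin n → ℤ) →+ (Fin n → ℚ) :=
  AddMonoidHom.mk' (fun x i => (x i : ℚ)) (by intro a b; funext i; simp)

lemma ratify_injective {n : ℕ} : Function.Injective (ratify (n := n)) := by
  intro x y h
  funext i
  have h2 : ((x i : ℤ) : ℚ) = ((y i : ℤ) : ℚ) := congrFun h i
  exact_mod_cast h2

lemma nsmul_pi_rat {n : ℕ} (m : ℕ) (x : Fin n → ℚ) : m • x = (m : ℚ) • x :=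
  (Nat.cast_smul_eq_nsmul ℚ m x).symm

lemma cast_smul_ratify {n : ℕ} (b : ℕ) (z : Fin n → ℤ) :
    (b : ℚ) • ratify z = ratify (b • z) := by
  funext i
  show (b : ℚ) * ((z i : ℤ) : ℚ) = (((b • z) i : ℤ) : ℚ)
  rw [Pi.smul_apply, nsmul_eq_mul]
  push_cast
  ring

lemma ratify_step {p n k K : ℕ} (hk : k ≤ K) {q : Fin n → ℤ} {x : Fin n → ℚ}
    (h : ratify q = p ^ k • x) : ratify (p ^ (K - k) • q) = p ^ K • x := by
  rw [map_nsmul, h, smul_smul, ← pow_add, Nat.sub_add_cancel hk]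

lemma exists_comb {n : ℕ} (S : Finset (Fin n → ℤ)) {q : Fin n → ℤ}
    (hq : q ∈ AddSubmonoid.closure (S : Set (Fin n → ℤ))) :
    ∃ c : Fin S.card → ℕ, ∑ i, c i • (S.equivFin.symm i : Fin n → ℤ) = q := by
  classical
  induction hq using AddSubmonoid.closure_induction with
  | mem x hx =>
    refine ⟨fun i => if i = S.equivFin ⟨x, hx⟩ then 1 else 0, ?_⟩
    simp only [ite_smul, one_smul, zero_smul, Finset.sum_ite_eq', Finset.mem_univ, if_true,
      Equiv.symm_apply_apply]
  | zero => exact ⟨0, by simp⟩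
  | add x y hx hy ihx ihy =>
    obtain ⟨c, hc⟩ := ihx
    obtain ⟨d, hd⟩ := ihy
    refine ⟨c + d, ?_⟩
    simp only [Pi.add_apply, add_smul, Finset.sum_add_distrib, hc, hd]

/-- Let `p` be a prime, `L = ℤ^n` and `Q ⊆ L` a fine, saturated, sharp
submonoid (saturated inside its group completion `Q^gp ⊆ L`).  Define
`Q[1/p] = ⋃_{k ≥ 0} {x ∈ Q^gp ⊗ ℤ[1/p] : p^k·x ∈ Q}` (realized inside `ℚ^n`).
Then `Q[1/p]` is an integral (cancellative), saturated, sharp, uniquely `p`-divisible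
monoid, multiplication by every positive integer on it is injective, and for any finite
generating set `S` of `Q` there is a surjective monoid homomorphism
`ℕ[1/p]^{|S|} → Q[1/p]`.  In particular `Q[1/p]` is `p`-finitely generated. -/
theorem stmt14 {p : ℕ} (hp : p.Prime) {n : ℕ}
    (Q : AddSubmonoid (Fin n → ℤ)) (hQfg : Q.FG)
    (hQsharp : ∀ x ∈ Q, ∀ y ∈ Q, x + y = 0 → x = 0 ∧ y = 0)
    (hQsat : ∀ x : Fin n → ℤ, x ∈ AddSubgroup.closure (Q : Set (Fin n → ℤ)) →
      (∃ m : ℕ, 1 ≤ m ∧ m • x ∈ Q) → x ∈ Q) :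
    ∃ QP : AddSubmonoid (Fin n → ℚ),
      -- `QP` is the monoid `Q[1/p]`
      (QP : Set (Fin n → ℚ)) =
        {x : Fin n → ℚ | ∃ k : ℕ, p ^ k • x ∈ ⇑ratify '' (Q : Set (Fin n → ℤ))} ∧
      -- integral (cancellative)
      (∀ a ∈ QP, ∀ b ∈ QP, ∀ c ∈ QP, a + b = a + c → b = c) ∧
      -- sharp
      (∀ a ∈ QP, ∀ b ∈ QP, a + b = 0 → a = 0 ∧ b = 0) ∧
      -- saturated (inside the subgroup of `ℚ^n` generated by `QP`)
      (∀ x : Fin n → ℚ, x ∈ AddSubgroup.closure (QP : Set (Fin n → ℚ)) →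
        (∃ m : ℕ, 1 ≤ m ∧ m • x ∈ QP) → x ∈ QP) ∧
      -- uniquely `p`-divisible
      Set.BijOn (fun x : Fin n → ℚ => p • x) (QP : Set (Fin n → ℚ)) (QP : Set (Fin n → ℚ)) ∧
      -- `m`-unique for every positive integer `m`
      (∀ m : ℕ, 0 < m → Set.InjOn (fun x : Fin n → ℚ => m • x) (QP : Set (Fin n → ℚ))) ∧
      -- a surjection `ℕ[1/p]^{|S|} → Q[1/p]` for every finite generating set `S` of `Q`
      (∀ S : Finset (Fin n → ℤ), AddSubmonoid.closure (S : Set (Fin n → ℤ)) = Q →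
        ∃ f : (Fin S.card → ↥(nLoc p)) →+ (Fin n → ℚ),
          (∀ t, f t ∈ QP) ∧ ∀ x ∈ QP, ∃ t, f t = x) := by
  classical
  have hp0 : (p : ℚ) ≠ 0 := by exact_mod_cast hp.ne_zero
  refine ⟨⟨⟨{x : Fin n → ℚ | ∃ k : ℕ, p ^ k • x ∈ ⇑ratify '' (Q : Set (Fin n → ℤ))}, ?_⟩, ?_⟩,
    rfl, ?_, ?_, ?_, ?_, ?_, ?_⟩
  · -- add_mem
    rintro x y ⟨k, q1, hq1, h1⟩ ⟨l, q2, hq2, h2⟩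
    refine ⟨k + l, p ^ l • q1 + p ^ k • q2,
      Q.add_mem (Q.nsmul_mem hq1 _) (Q.nsmul_mem hq2 _), ?_⟩
    rw [map_add, map_nsmul, map_nsmul, h1, h2, smul_add, smul_smul, smul_smul,
      ← pow_add, ← pow_add, add_comm l k]
  · -- zero_mem
    exact ⟨0, 0, Q.zero_mem, by simp⟩
  · -- cancellative
    intro a _ b _ c _ h
    exact add_left_cancel h
  · -- sharp
    rintro a ⟨k, qa, hqa, ha⟩ b ⟨l, qb, hqb, hb⟩ hab
    have ha' : ratify (p ^ l • qa) = p ^ (k + l) • a := by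
      have := ratify_step (Nat.le_add_right k l) ha
      simpa using this
    have hb' : ratify (p ^ k • qb) = p ^ (k + l) • b := by
      have := ratify_step (Nat.le_add_left l k) hb
      simpa using this
    have hsum : p ^ l • qa + p ^ k • qb = 0 := by
      apply ratify_injective
      rw [map_add, ha', hb', ← smul_add, hab, smul_zero, map_zero]
    obtain ⟨h1, h2⟩ := hQsharp _ (Q.nsmul_mem hqa _) _ (Q.nsmul_mem hqb _) hsum
    have hpk : ((p : ℚ) ^ (k + l)) ≠ 0 := pow_ne_zero _ hp0
    constructor
    · have h3 : p ^ (k + l) • a = 0 := by rw [← ha', h1, map_zero]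
      rw [nsmul_pi_rat] at h3
      push_cast at h3
      exact (smul_eq_zero.mp h3).resolve_left hpk
    · have h3 : p ^ (k + l) • b = 0 := by rw [← hb', h2, map_zero]
      rw [nsmul_pi_rat] at h3
      push_cast at h3
      exact (smul_eq_zero.mp h3).resolve_left hpk
  · -- saturated
    have hdiff : ∀ y ∈ AddSubgroup.closure
        ({x : Fin n → ℚ | ∃ k : ℕ, p ^ k • x ∈ ⇑ratify '' (Q : Set (Fin n → ℤ))}),
        ∃ u v : Fin n → ℚ,
        (∃ k : ℕ, p ^ k • u ∈ ⇑ratify '' (Q : Set (Fin n → ℤ))) ∧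
        (∃ k : ℕ, p ^ k • v ∈ ⇑ratify '' (Q : Set (Fin n → ℤ))) ∧ y = u - v := by
      intro y hy
      induction hy using AddSubgroup.closure_induction with
      | mem y hy => exact ⟨y, 0, hy, ⟨0, 0, Q.zero_mem, by simp⟩, by simp⟩
      | zero => exact ⟨0, 0, ⟨0, 0, Q.zero_mem, by simp⟩, ⟨0, 0, Q.zero_mem, by simp⟩, by simp⟩
      | add y z _ _ ihy ihz =>
        obtain ⟨u1, v1, ⟨k1, q1, hq1, e1⟩, ⟨l1, r1, hr1, f1⟩, h1⟩ := ihy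
        obtain ⟨u2, v2, ⟨k2, q2, hq2, e2⟩, ⟨l2, r2, hr2, f2⟩, h2⟩ := ihz
        refine ⟨u1 + u2, v1 + v2, ?_, ?_, by rw [h1, h2]; abel⟩
        · refine ⟨k1 + k2, p ^ k2 • q1 + p ^ k1 • q2,
            Q.add_mem (Q.nsmul_mem hq1 _) (Q.nsmul_mem hq2 _), ?_⟩
          rw [map_add, map_nsmul, map_nsmul, e1, e2, smul_add, smul_smul, smul_smul,
            ← pow_add, ← pow_add, add_comm k2 k1]
        · refine ⟨l1 + l2, p ^ l2 • r1 + p ^ l1 • r2,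
            Q.add_mem (Q.nsmul_mem hr1 _) (Q.nsmul_mem hr2 _), ?_⟩
          rw [map_add, map_nsmul, map_nsmul, f1, f2, smul_add, smul_smul, smul_smul,
            ← pow_add, ← pow_add, add_comm l2 l1]
      | neg y _ ihy =>
        obtain ⟨u, v, hu, hv, h⟩ := ihy
        exact ⟨v, u, hv, hu, by rw [h]; abel⟩
    rintro x hx ⟨m, hm, hmx⟩
    obtain ⟨k0, w, hwQ, hweq⟩ := hmx
    obtain ⟨u, v, ⟨ku, qu, hqu, eu⟩, ⟨kv, qv, hqv, ev⟩, hx'⟩ := hdiff x hx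
    set K := ku + kv with hK
    have eu' : ratify (p ^ kv • qu) = p ^ K • u := by
      have := ratify_step (Nat.le_add_right ku kv) eu; simpa using this
    have ev' : ratify (p ^ ku • qv) = p ^ K • v := by
      have := ratify_step (Nat.le_add_left kv ku) ev; simpa using this
    set z : Fin n → ℤ := p ^ kv • qu - p ^ ku • qv with hz
    have hzx : ratify z = p ^ K • x := by
      rw [hz, map_sub, eu', ev', hx', smul_sub]
    have hzgp : z ∈ AddSubgroup.closure (Q : Set (Fin n → ℤ)) :=
      sub_mem (AddSubgroup.subset_closure (Q.nsmul_mem hqu _))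
        (AddSubgroup.subset_closure (Q.nsmul_mem hqv _))
    have key : m • (p ^ k0 • z) = p ^ K • w := by
      apply ratify_injective
      rw [map_nsmul, map_nsmul, map_nsmul, hzx, hweq, smul_smul, smul_smul, smul_smul,
        smul_smul]
      congr 1
      ring
    have hzQ : p ^ k0 • z ∈ Q := by
      refine hQsat _ (AddSubgroup.nsmul_mem _ hzgp _) ⟨m, hm, ?_⟩
      rw [key]
      exact Q.nsmul_mem hwQ _
    exact ⟨K + k0, p ^ k0 • z, hzQ, by
      rw [map_nsmul, hzx, smul_smul, ← pow_add, add_comm k0 K]⟩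
  · -- uniquely p-divisible
    refine ⟨?_, ?_, ?_⟩
    · rintro x ⟨k, q, hq, h⟩
      exact ⟨k, p • q, Q.nsmul_mem hq p, by rw [map_nsmul, h, smul_comm]⟩
    · intro x _ y _ h
      have h' : (p : ℚ) • x = (p : ℚ) • y := by
        rw [← nsmul_pi_rat, ← nsmul_pi_rat]; exact h
      exact smul_right_injective _ hp0 h'
    · rintro y ⟨k, q, hq, h⟩
      refine ⟨(p : ℚ)⁻¹ • y, ⟨k + 1, q, hq, ?_⟩, ?_⟩
      · have hcoef : ((p ^ (k + 1) : ℕ) : ℚ) * (p : ℚ)⁻¹ = ((p ^ k : ℕ) : ℚ) := by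
          push_cast
          rw [pow_succ, mul_assoc, mul_inv_cancel₀ hp0, mul_one]
        rw [nsmul_pi_rat, smul_smul, hcoef, ← nsmul_pi_rat]
        exact h
      · show p • ((p : ℚ)⁻¹ • y) = y
        rw [nsmul_pi_rat, smul_smul, mul_inv_cancel₀ hp0, one_smul]
  · -- m-unique
    intro m hm x _ y _ h
    have hm0 : (m : ℚ) ≠ 0 := Nat.cast_ne_zero.mpr hm.ne'
    have h' : (m : ℚ) • x = (m : ℚ) • y := by
      rw [← nsmul_pi_rat, ← nsmul_pi_rat]; exact h
    exact smul_right_injective _ hm0 h'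
  · -- surjection from ℕ[1/p]^|S|
    intro S hS
    have hsQ : ∀ i : Fin S.card, (S.equivFin.symm i : Fin n → ℤ) ∈ Q := fun i => by
      rw [← hS]; exact AddSubmonoid.subset_closure (S.equivFin.symm i).2
    refine ⟨AddMonoidHom.mk'
      (fun t => ∑ i, ((t i : ℚ)) • ratify ((S.equivFin.symm i : Fin n → ℤ))) ?_, ?_, ?_⟩
    · intro a b
      simp only [Pi.add_apply, AddSubmonoid.coe_add, add_smul, Finset.sum_add_distrib]
    · -- values in QP
      intro t
      choose a k hak using fun i => (t i).2
      refine ⟨∑ i, k i,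
        ∑ i, (a i * p ^ ((∑ j, k j) - k i)) • (S.equivFin.symm i : Fin n → ℤ),
        Q.sum_mem (fun i _ => Q.nsmul_mem (hsQ i) _), ?_⟩
      rw [map_sum]
      show _ = (p : ℕ) ^ (∑ i, k i) •
        ∑ i, ((t i : ℚ)) • ratify ((S.equivFin.symm i : Fin n → ℤ))
      rw [nsmul_pi_rat, Finset.smul_sum]
      refine Finset.sum_congr rfl (fun i _ => ?_)
      rw [← cast_smul_ratify, smul_smul]
      congr 1
      have hki : k i ≤ ∑ j, k j :=
        Finset.single_le_sum (fun j _ => Nat.zero_le _) (Finset.mem_univ i)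
      push_cast
      rw [← hak i, mul_assoc, ← pow_add, Nat.add_sub_cancel' hki, mul_comm]
    · -- surjectivity
      rintro x ⟨k, q, hq, h⟩
      rw [← hS] at hq
      obtain ⟨c, hc⟩ := exists_comb S hq
      refine ⟨fun i => ⟨(c i : ℚ) / (p : ℚ) ^ k, c i, k, by
        field_simp⟩, ?_⟩
      have h1 : ∀ i : Fin S.card, ((c i : ℚ) / (p : ℚ) ^ k) •
          ratify ((S.equivFin.symm i : Fin n → ℤ))
          = ((p : ℚ) ^ k)⁻¹ • ((c i : ℚ) • ratify ((S.equivFin.symm i : Fin n → ℤ))) := by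
        intro i
        rw [smul_smul, div_eq_mul_inv, mul_comm]
      have hsum2 : ∑ i, (c i : ℚ) • ratify ((S.equivFin.symm i : Fin n → ℤ)) = ratify q := by
        rw [← hc, map_sum]
        exact Finset.sum_congr rfl (fun i _ => cast_smul_ratify _ _)
      show (∑ i, ((c i : ℚ) / (p : ℚ) ^ k) • ratify ((S.equivFin.symm i : Fin n → ℤ))) = x
      rw [Finset.sum_congr rfl (fun i _ => h1 i), ← Finset.smul_sum, hsum2, h,
        nsmul_pi_rat, smul_smul]
      push_cast
      rw [inv_mul_cancel₀ (pow_ne_zero _ hp0), one_smul]
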